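/- arXiv:1909.12150 — 2 statements merged into one kernel-verified Lean document; each statement's English description precedes it below -/
import Mathlib

section
/- Let (N, D, θ) be a sandpile model in dimension d and let c be a finite configuration. For every sequential derivation c = c_0 ⇀_{z_1} c_1 ⇀ … ⇀_{z_k} c_k = c' and every pair of cells x, y with y ∈ x + N, the toppling counts at x and y differ by at most the total number of grains: |#{i : z_i = x} − #{i : z_i = y}| ≤ Σ_{z∈ℤ^d} c(z). -/
/-- A sandpile model in dimension `d`: a finite nonempty neighborhood
`N ⊆ ℤ^d \ {0}` and a distribution `D` with `D v ≥ 1` for `v ∈ N`. -/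
structure Sandpile (d : ℕ) where
  N : Finset (Fin d → ℤ)
  D : (Fin d → ℤ) → ℕ
  N_nonempty : N.Nonempty
  zero_not_mem : (0 : Fin d → ℤ) ∉ N
  D_pos : ∀ v ∈ N, 1 ≤ D v

/-- The stability threshold `θ = Σ_{v ∈ N} D(v)`. -/
def Sandpile.θ {d : ℕ} (M : Sandpile d) : ℕ := ∑ v ∈ M.N, M.D v

/-- The Heaviside function: `H n = 1` if `n ≥ 0`, else `0`. -/
def Heaviside (n : ℤ) : ℕ := if 0 ≤ n then 1 else 0

/-- The parallel global rule `F`. -/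
def Sandpile.F {d : ℕ} (M : Sandpile d) (c : (Fin d → ℤ) → ℕ) : (Fin d → ℤ) → ℕ :=
  fun x => c x - M.θ * Heaviside ((c x : ℤ) - (M.θ : ℤ))
    + ∑ y ∈ M.N, M.D y * Heaviside ((c (x + y) : ℤ) - (M.θ : ℤ))

/-- A configuration is stable when every cell holds fewer than `θ` grains. -/
def Sandpile.Stable {d : ℕ} (M : Sandpile d) (c : (Fin d → ℤ) → ℕ) : Prop :=
  ∀ x, c x < M.θ

/-- A configuration is finite when its total number of grains is finite,
equivalently its support is finite. -/
def FiniteConfig {d : ℕ} (c : (Fin d → ℤ) → ℕ) : Prop :=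
  (Function.support c).Finite

/-- Sequential toppling at an unstable cell `x`: remove `θ` grains from `x`
and add `D(y−x)` grains to each `y ∈ x + N`, other cells unchanged. -/
def Sandpile.SeqStepAt {d : ℕ} (M : Sandpile d) (x : Fin d → ℤ)
    (c c' : (Fin d → ℤ) → ℕ) : Prop :=
  M.θ ≤ c x ∧
    ∀ y, c' y = (if y = x then c y - M.θ else c y)
      + (if y - x ∈ M.N then M.D (y - x) else 0)

/-- `c ⇀ c'`: a sequential toppling at some unstable cell. -/
def Sandpile.SeqStep {d : ℕ} (M : Sandpile d)
    (c c' : (Fin d → ℤ) → ℕ) : Prop :=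
  ∃ x, M.SeqStepAt x c c'

/-- `c ⇀* c'`: reflexive–transitive closure of `⇀`. -/
def Sandpile.SeqReach {d : ℕ} (M : Sandpile d)
    (c c' : (Fin d → ℤ) → ℕ) : Prop :=
  Relation.ReflTransGen M.SeqStep c c'

/-!
Let `t z` be the number of topplings at `z`. Each toppling moves grains without creating any, so
the final configuration is `c - M.loss t`, where `M.loss t z = θ t z - ∑ v ∈ N, D v * t (z - v)`
is the net number of grains `z` loses; hence the sum of `M.loss t` over any finite set is at most the number of
grains of `c`. Over a finite set `A` this sum equals `∑ v ∈ N, D v * (∑ A t - ∑ A t(· - v))`.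
When `A` is a superlevel set of `t`, translating it can only lower the sum of `t`, so every
bracket is nonnegative; choosing the level between `t x` and `t y` so that `A` separates `x`
from `y = x + v`, the bracket for `v` is at least `|t x - t y|`.
-/

open Finset Function

section LevelSets

variable {G : Type*} [AddCommGroup G] [DecidableEq G]

theorem sum_comp_sub_add_sum_filter {M : Type*} [AddCommMonoid M] (p : G → M)
    {A : Finset G} (hA : ∀ z, p z ≠ 0 → z ∈ A) (v : G) :
    ∑ z ∈ A, p (z - v) + ∑ z ∈ A with z + v ∉ A, p z = ∑ z ∈ A, p z := by
  have hshift : ∑ z ∈ A, p (z - v) = ∑ z ∈ A with z + v ∈ A, p z := by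
    rw [← sum_filter_of_ne (p := fun z => z - v ∈ A) fun z _ h => hA _ h]
    refine sum_nbij' (· - v) (· + v) ?_ ?_ ?_ ?_ fun _ _ => rfl <;>
      simp +contextual
  rw [hshift, sum_filter_add_sum_filter_not]

theorem sum_comp_sub_add_eq_sum_of_superlevel (t : G → ℕ) {q : ℕ} {A : Finset G}
    (hgt : ∀ z, q < t z → z ∈ A) (hge : ∀ z ∈ A, q ≤ t z) (v : G) :
    ∑ z ∈ A, t (z - v) + ∑ z ∈ A, (q - t (z - v)) + ∑ z ∈ A with z + v ∉ A, (t z - q)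
      = ∑ z ∈ A, t z := by
  have hshift := sum_comp_sub_add_sum_filter (fun z => t z - q)
    (A := A) (fun z hz => hgt z (by omega)) v
  rw [← sum_add_distrib,
    sum_congr rfl fun z _ => show t (z - v) + (q - t (z - v)) = q + (t (z - v) - q) by omega,
    sum_add_distrib, add_assoc, hshift, ← sum_add_distrib]
  exact sum_congr rfl fun z hz => by have := hge z hz; omega

theorem exists_finset_abs_sub_le_sum_sub_sum_comp_sub (t : G → ℕ) (ht : (support t).Finite)
    (x v : G) :
    ∃ A : Finset G, (∀ w, ∑ z ∈ A, t (z - w) ≤ ∑ z ∈ A, t z) ∧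
      |(t x : ℤ) - t (x + v)| ≤ ∑ z ∈ A, (t z : ℤ) - ∑ z ∈ A, (t (z - v) : ℤ) := by
  simp only [← Nat.cast_sum]
  rcases le_or_gt (t (x + v)) (t x) with hle | hlt
  · -- cut just above `t (x + v)`: the level set contains `x` but not `x + v`
    set A := ht.toFinset.filter (t (x + v) < t ·)
    have hid := sum_comp_sub_add_eq_sum_of_superlevel t (A := A)
      (fun z hz => by simp [A, hz, Nat.ne_zero_of_lt hz]) (fun z hz => (mem_filter.1 hz).2.le)
    refine ⟨A, fun w => by have := hid w; omega, ?_⟩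
    have hx : t x - t (x + v) ≤ ∑ z ∈ A with z + v ∉ A, (t z - t (x + v)) := by
      rcases hle.eq_or_lt with heq | hlt
      · rw [heq, Nat.sub_self]; exact Nat.zero_le _
      · exact single_le_sum (f := fun z => t z - t (x + v)) (fun _ _ => Nat.zero_le _)
          (show x ∈ A.filter (· + v ∉ A) from
            mem_filter.2 ⟨mem_filter.2 ⟨ht.mem_toFinset.2 (Nat.ne_zero_of_lt hlt), hlt⟩,
              fun h => lt_irrefl _ (mem_filter.1 h).2⟩)
    have := hid v
    rw [abs_of_nonneg (by omega)]
    omega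
  · -- cut at `t (x + v)`: the level set contains `x + v` but not `x`
    set A := ht.toFinset.filter (t (x + v) ≤ t ·)
    have hid := sum_comp_sub_add_eq_sum_of_superlevel t (A := A)
      (fun z hz => by simp [A, hz.le]; omega) (fun z hz => (mem_filter.1 hz).2)
    refine ⟨A, fun w => by have := hid w; omega, ?_⟩
    have hx : t (x + v) - t x ≤ ∑ z ∈ A, (t (x + v) - t (z - v)) := by
      simpa using single_le_sum (f := fun z => t (x + v) - t (z - v)) (fun _ _ => Nat.zero_le _)
        (show x + v ∈ A by simp [A]; omega)
    have := hid v
    rw [abs_of_nonpos (by omega)]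
    omega

end LevelSets

namespace Sandpile

variable {d : ℕ} (M : Sandpile d)

def loss (t : (Fin d → ℤ) → ℕ) (z : Fin d → ℤ) : ℤ :=
  (M.θ : ℤ) * t z - ∑ v ∈ M.N, (M.D v : ℤ) * t (z - v)

theorem sum_loss_eq (t : (Fin d → ℤ) → ℕ) (A : Finset (Fin d → ℤ)) :
    ∑ z ∈ A, M.loss t z
      = ∑ v ∈ M.N, M.D v * (∑ z ∈ A, (t z : ℤ) - ∑ z ∈ A, (t (z - v) : ℤ)) := by
  simp only [loss, θ, Nat.cast_sum, sum_mul, mul_sub, mul_sum, sum_sub_distrib]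
  rw [sum_comm, sum_comm (s := A)]

theorem exists_finset_abs_sub_le_sum_loss (t : (Fin d → ℤ) → ℕ) (ht : (support t).Finite)
    {x y : Fin d → ℤ} (hxy : y - x ∈ M.N) :
    ∃ A : Finset (Fin d → ℤ), |(t x : ℤ) - t y| ≤ ∑ z ∈ A, M.loss t z := by
  obtain ⟨A, hmono, hxv⟩ := exists_finset_abs_sub_le_sum_sub_sum_comp_sub t ht x (y - x)
  rw [add_sub_cancel] at hxv
  refine ⟨A, ?_⟩
  have hnonneg : ∀ v ∈ M.N,
      0 ≤ (M.D v : ℤ) * (∑ z ∈ A, (t z : ℤ) - ∑ z ∈ A, (t (z - v) : ℤ)) := fun v _ =>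
    mul_nonneg (Nat.cast_nonneg _) (sub_nonneg.2 (by exact_mod_cast hmono v))
  calc |(t x : ℤ) - t y|
      ≤ M.D (y - x) * (∑ z ∈ A, (t z : ℤ) - ∑ z ∈ A, (t (z - (y - x)) : ℤ)) :=
        hxv.trans (le_mul_of_one_le_left ((abs_nonneg _).trans hxv)
          (by exact_mod_cast M.D_pos _ hxy))
    _ ≤ ∑ z ∈ A, M.loss t z := by
        rw [sum_loss_eq]; exact single_le_sum hnonneg hxy

theorem loss_add (t s : (Fin d → ℤ) → ℕ) (z : Fin d → ℤ) :
    M.loss (t + s) z = M.loss t z + M.loss s z := by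
  simp only [loss, Pi.add_apply, Nat.cast_add, mul_add, sum_add_distrib]
  ring

theorem loss_single (x z : Fin d → ℤ) :
    M.loss (Pi.single x 1) z
      = (if z = x then (M.θ : ℤ) else 0) - if z - x ∈ M.N then (M.D (z - x) : ℤ) else 0 := by
  have hsum : ∑ v ∈ M.N, (M.D v : ℤ) * ((Pi.single x 1 : (Fin d → ℤ) → ℕ) (z - v) : ℤ)
      = ∑ v ∈ M.N, if z - x = v then (M.D v : ℤ) else 0 :=
    sum_congr rfl fun v _ => by simp only [Pi.single_apply, sub_eq_iff_comm]; split_ifs <;> simp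
  rw [loss, hsum, sum_ite_eq]
  by_cases h : z = x <;> simp [h]

theorem SeqStepAt.cast_eq_sub_loss {M : Sandpile d} {x : Fin d → ℤ} {c c' : (Fin d → ℤ) → ℕ}
    (h : M.SeqStepAt x c c') (z : Fin d → ℤ) : (c' z : ℤ) = c z - M.loss (Pi.single x 1) z := by
  rw [h.2 z, loss_single]
  by_cases hz : z = x
  · subst hz
    simp [M.zero_not_mem, Nat.cast_sub h.1]
  · split_ifs <;> simp

def toppleCount {k : ℕ} (zs : Fin k → Fin d → ℤ) (z : Fin d → ℤ) : ℕ := #{i | zs i = z}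

theorem finite_support_toppleCount {k : ℕ} (zs : Fin k → Fin d → ℤ) :
    (support (toppleCount zs)).Finite :=
  (Set.finite_range zs).subset fun z hz => by
    obtain ⟨i, hi⟩ := card_ne_zero.1 hz
    exact ⟨i, (mem_filter.1 hi).2⟩

theorem toppleCount_succ {k : ℕ} (zs : Fin (k + 1) → Fin d → ℤ) :
    toppleCount zs = toppleCount (fun i => zs i.castSucc) + Pi.single (zs (Fin.last k)) 1 := by
  ext z
  simp only [toppleCount, card_filter, Fin.sum_univ_castSucc, Pi.add_apply, Pi.single_apply,
    eq_comm (a := z)]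

theorem cast_last_eq_sub_loss_toppleCount {k : ℕ} {cs : Fin (k + 1) → (Fin d → ℤ) → ℕ}
    {zs : Fin k → Fin d → ℤ} (hstep : ∀ i, M.SeqStepAt (zs i) (cs i.castSucc) (cs i.succ))
    (z : Fin d → ℤ) : (cs (Fin.last k) z : ℤ) = cs 0 z - M.loss (toppleCount zs) z := by
  induction k generalizing z with
  | zero => simp [toppleCount, loss]
  | succ k ih =>
    have hinit := ih (cs := fun i => cs i.castSucc) (zs := fun i => zs i.castSucc)
      (fun i => by simpa only [Fin.succ_castSucc] using hstep i.castSucc) z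
    have hlast := (hstep (Fin.last k)).cast_eq_sub_loss z
    rw [Fin.succ_last] at hlast
    rw [hlast, hinit, toppleCount_succ, loss_add, Fin.castSucc_zero]
    ring

end Sandpile

theorem sandpile_neighbor_toppling_counts_close_general {d : ℕ}
    (M : Sandpile d) (c : (Fin d → ℤ) → ℕ) (hfin : (Function.support c).Finite)
    (k : ℕ) (cs : Fin (k + 1) → (Fin d → ℤ) → ℕ) (zs : Fin k → (Fin d → ℤ))
    (hc0 : cs 0 = c)
    (hstep : ∀ i : Fin k, M.SeqStepAt (zs i) (cs i.castSucc) (cs i.succ))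
    (x y : Fin d → ℤ) (hxy : y - x ∈ M.N) :
    |((Finset.univ.filter (fun i : Fin k => zs i = x)).card : ℤ)
        - ((Finset.univ.filter (fun i : Fin k => zs i = y)).card : ℤ)|
      ≤ (∑ z ∈ hfin.toFinset, c z : ℕ) := by
  obtain ⟨A, hA⟩ :=
    M.exists_finset_abs_sub_le_sum_loss _ (Sandpile.finite_support_toppleCount zs) hxy
  calc _ ≤ ∑ z ∈ A, M.loss (Sandpile.toppleCount zs) z := hA
    _ ≤ ∑ z ∈ A, (c z : ℤ) := sum_le_sum fun z _ => by
        have := M.cast_last_eq_sub_loss_toppleCount hstep z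
        rw [hc0] at this
        omega
    _ ≤ _ := by exact_mod_cast sum_le_sum_of_ne_zero fun z _ hz => hfin.mem_toFinset.2 hz

/-- along any sequential derivation from a finite configuration
`c`, the toppling counts of two neighboring cells `x` and `y ∈ x + N` differ
by at most the total number of grains of `c`. -/
theorem sandpile_neighbor_toppling_counts_close {d : ℕ} (hd : 1 ≤ d)
    (M : Sandpile d) (c : (Fin d → ℤ) → ℕ) (hfin : (Function.support c).Finite)
    (k : ℕ) (cs : Fin (k + 1) → (Fin d → ℤ) → ℕ) (zs : Fin k → (Fin d → ℤ))
    (hc0 : cs 0 = c)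
    (hstep : ∀ i : Fin k, M.SeqStepAt (zs i) (cs i.castSucc) (cs i.succ))
    (x y : Fin d → ℤ) (hxy : y - x ∈ M.N) :
    |((Finset.univ.filter (fun i : Fin k => zs i = x)).card : ℤ)
        - ((Finset.univ.filter (fun i : Fin k => zs i = y)).card : ℤ)|
      ≤ (∑ z ∈ hfin.toFinset, c z : ℕ) :=
  sandpile_neighbor_toppling_counts_close_general M c hfin k cs zs hc0 hstep x y hxy
end

section
/- (Polynomial-time stabilization) Let (N, D, θ) be a sandpile model in dimension d with complete neighborhood N, set r = max{|v|_∞ : v ∈ N}, and let c be a configuration lying within the elementary hypercube of side n with c(x) < 2θ for every cell x. Then the parallel dynamics reaches a stable configuration within at most T = 2^{3d+4} · d^{d+1} · θ^{d+2} · r^{d+1} · n^{d²+2d} steps: the configuration F^T(c) is stable. -/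
/-- The neighborhood is complete: every element of `ℤ^d` is a nonnegative
integer combination of elements of `N`. -/
def Sandpile.Complete {d : ℕ} (M : Sandpile d) : Prop :=
  ∀ z : Fin d → ℤ, ∃ a : (Fin d → ℤ) → ℕ, z = ∑ v ∈ M.N, (a v : ℤ) • v

/-- The configuration lies within the elementary hypercube of side `n`:
`c x = 0` for all `x ∉ {0,…,n−1}^d`. -/
def InCube {d : ℕ} (n : ℕ) (c : (Fin d → ℤ) → ℕ) : Prop :=
  ∀ x : Fin d → ℤ, (¬ ∀ i, 0 ≤ x i ∧ x i < (n : ℤ)) → c x = 0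

/-- Add one grain at cell `y` (i.e. `c + 1_y`). -/
def addGrain {d : ℕ} (c : (Fin d → ℤ) → ℕ) (y : Fin d → ℤ) : (Fin d → ℤ) → ℕ :=
  fun x => if x = y then c x + 1 else c x

/-- `r` is the maximal sup-norm of a neighborhood vector:
`r = max{|v|_∞ : v ∈ N}`. -/
def Sandpile.IsRadius {d : ℕ} (M : Sandpile d) (r : ℕ) : Prop :=
  (∀ v ∈ M.N, ∀ i, (v i).natAbs ≤ r) ∧ (∃ v ∈ M.N, ∃ i, (v i).natAbs = r)

/-!
A grain at level `≥ b` along a coordinate direction must have been pushed across `b` by a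
toppling in the strip `[b - r, b)`; and by completeness, a strip of width `2r` in which a toppling
once happened keeps holding a grain forever. So `S + 1` stacked strips beyond the initial cube
would each hold a grain, exceeding the conserved mass `S`: the orbit stays in the sup-ball of
radius `R = n + 2r(S + 1)`. On that ball take `φ x = ⟨x, x⟩` if the drift `Σ D(y) y` vanishes and
`φ x = -⟨x, drift⟩` otherwise; every toppling raises `Σ c φ` by at least one, while
`|Σ c φ| ≤ S · max |φ|`, which bounds the number of non-stable steps.
-/

open Finset Function

lemma Finset.sum_le_finsum {α : Type*} {f : α → ℕ} (hf : (support f).Finite) (s : Finset α) :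
    ∑ x ∈ s, f x ≤ ∑ᶠ x, f x := by
  classical
  rw [finsum_eq_finsetSum_of_support_subset f (s := s ∪ hf.toFinset) (by simp)]
  exact sum_le_sum_of_subset subset_union_left

lemma Finset.abs_sum_natCast_mul_le {ι : Type*} (s : Finset ι) (f : ι → ℕ) {g : ι → ℤ} {C : ℤ}
    (hg : ∀ i ∈ s, |g i| ≤ C) : |∑ i ∈ s, (f i : ℤ) * g i| ≤ (∑ i ∈ s, f i : ℕ) * C := by
  push_cast
  rw [sum_mul]
  refine (abs_sum_le_sum_abs _ _).trans (sum_le_sum fun i hi => ?_)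
  rw [abs_mul, Nat.abs_cast]
  exact mul_le_mul_of_nonneg_left (hg i hi) (by positivity)

lemma abs_dotProduct_le {ι α : Type*} [Fintype ι] [CommRing α] [LinearOrder α]
    [IsStrictOrderedRing α] {u v : ι → α} {a b : α} (hu : ∀ i, |u i| ≤ a) (hv : ∀ i, |v i| ≤ b) :
    |u ⬝ᵥ v| ≤ Fintype.card ι * (a * b) := by
  refine (abs_sum_le_sum_abs _ _).trans ?_
  calc ∑ i, |u i * v i| ≤ ∑ _i : ι, a * b := sum_le_sum fun i _ => by
        rw [abs_mul]; exact mul_le_mul (hu i) (hv i) (abs_nonneg _) ((abs_nonneg _).trans (hu i))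
    _ = Fintype.card ι * (a * b) := by simp

lemma one_le_dotProduct_self {ι : Type*} [Fintype ι] {v : ι → ℤ} (hv : v ≠ 0) : 1 ≤ v ⬝ᵥ v :=
  lt_of_le_of_ne (Fintype.sum_nonneg fun i => mul_self_nonneg (v i))
    (Ne.symm (dotProduct_self_eq_zero.not.2 hv))

noncomputable def supBall (d R : ℕ) : Finset (Fin d → ℤ) :=
  Fintype.piFinset fun _ => Icc (-(R : ℤ)) R

lemma mem_supBall {d R : ℕ} {x : Fin d → ℤ} : x ∈ supBall d R ↔ ∀ i, |x i| ≤ R := by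
  simp [supBall, abs_le]

section InCube

variable {d n : ℕ} {c : (Fin d → ℤ) → ℕ}

lemma InCube.mem_Ico (h : InCube n c) {x : Fin d → ℤ} (hx : c x ≠ 0) :
    ∀ i, 0 ≤ x i ∧ x i < n := by
  by_contra h'
  exact hx (h x h')

lemma InCube.support_subset (h : InCube n c) :
    support c ⊆ ↑(Fintype.piFinset fun _ : Fin d => Ico (0 : ℤ) n) := fun x hx => by
  simpa using h.mem_Ico hx

lemma InCube.finiteConfig (h : InCube n c) : FiniteConfig c :=
  (finite_toSet _).subset h.support_subset

lemma InCube.finsum_le (h : InCube n c) {m : ℕ} (hm : ∀ x, c x ≤ m) :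
    ∑ᶠ x, c x ≤ m * n ^ d := by
  rw [finsum_eq_finsetSum_of_support_subset _ h.support_subset]
  calc _ ≤ ∑ _x ∈ Fintype.piFinset fun _ : Fin d => Ico (0 : ℤ) n, m := sum_le_sum fun x _ => hm x
    _ = m * n ^ d := by simp [mul_comm]

end InCube

namespace Sandpile

variable {d : ℕ} (M : Sandpile d)

lemma exists_coord_ne_zero : ∃ v ∈ M.N, ∃ i, v i ≠ 0 := by
  obtain ⟨v, hv⟩ := M.N_nonempty
  obtain ⟨i, hi⟩ := Function.ne_iff.1 (ne_of_mem_of_not_mem hv M.zero_not_mem)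
  exact ⟨v, hv, i, hi⟩

lemma one_le_dim (M : Sandpile d) : 1 ≤ d := by
  obtain ⟨_, _, i, _⟩ := M.exists_coord_ne_zero
  exact Fin.pos i

lemma one_le_of_abs_le {r : ℕ} (hr : ∀ v ∈ M.N, ∀ i, |v i| ≤ r) : 1 ≤ r := by
  obtain ⟨v, hv, i, hi⟩ := M.exists_coord_ne_zero
  exact_mod_cast (Int.one_le_abs hi).trans (hr v hv i)

lemma IsRadius.abs_le {r : ℕ} (hr : M.IsRadius r) : ∀ v ∈ M.N, ∀ i, |v i| ≤ r :=
  fun v hv i => by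
    rw [Int.abs_eq_natAbs]
    exact_mod_cast hr.1 v hv i

lemma θ_pos : 0 < M.θ := by
  obtain ⟨v, hv⟩ := M.N_nonempty
  exact (M.D_pos v hv).trans (single_le_sum (fun _ _ => Nat.zero_le _) hv)

lemma cast_θ : (M.θ : ℤ) = ∑ y ∈ M.N, (M.D y : ℤ) := by
  simp [Sandpile.θ]

/-- A toppling at `u` moves `D y` grains to `u - y` (cell `x` receives from `x + y`), so this is
the change of `∑ x, c x * φ x` caused by one toppling at `u`. -/
def gain (φ : (Fin d → ℤ) → ℤ) (u : Fin d → ℤ) : ℤ :=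
  ∑ y ∈ M.N, (M.D y : ℤ) * (φ (u - y) - φ u)

def drift : Fin d → ℤ := ∑ y ∈ M.N, (M.D y : ℤ) • y

variable {M} {c : (Fin d → ℤ) → ℕ}

lemma cast_F_apply (c : (Fin d → ℤ) → ℕ) (x : Fin d → ℤ) :
    (M.F c x : ℤ) = c x - (if M.θ ≤ c x then (M.θ : ℤ) else 0)
      + ∑ y ∈ M.N, if M.θ ≤ c (x + y) then (M.D y : ℤ) else 0 := by
  have hH : ∀ a : ℕ, Heaviside ((a : ℤ) - M.θ) = if M.θ ≤ a then 1 else 0 := fun a => by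
    simp [Heaviside]
  simp only [Sandpile.F, hH]
  split_ifs with h <;> simp [h]

lemma D_le_F_apply {x y : Fin d → ℤ} (hy : y ∈ M.N) (h : M.θ ≤ c (x + y)) :
    M.D y ≤ M.F c x := by
  have hsum : (M.D y : ℤ) ≤ ∑ z ∈ M.N, if M.θ ≤ c (x + z) then (M.D z : ℤ) else 0 := by
    simpa [h] using single_le_sum (f := fun z => if M.θ ≤ c (x + z) then (M.D z : ℤ) else 0)
      (fun z _ => by positivity) hy
  have hx : (if M.θ ≤ c x then (M.θ : ℤ) else 0) ≤ c x := by split_ifs <;> omega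
  have := cast_F_apply (M := M) c x
  omega

lemma F_apply_ne_zero_of_unstable {x y : Fin d → ℤ} (hy : y ∈ M.N) (h : M.θ ≤ c (x + y)) :
    M.F c x ≠ 0 :=
  Nat.one_le_iff_ne_zero.1 ((M.D_pos y hy).trans (D_le_F_apply hy h))

lemma le_F_apply_of_lt {x : Fin d → ℤ} (h : c x < M.θ) : c x ≤ M.F c x := by
  have hsum : 0 ≤ ∑ y ∈ M.N, if M.θ ≤ c (x + y) then (M.D y : ℤ) else 0 :=
    sum_nonneg fun _ _ => by positivity
  have := cast_F_apply (M := M) c x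
  simp only [not_le.2 h, if_false] at this
  omega

lemma ne_zero_or_exists_of_F_apply_ne_zero {x : Fin d → ℤ} (h : M.F c x ≠ 0) :
    c x ≠ 0 ∨ ∃ y ∈ M.N, M.θ ≤ c (x + y) := by
  by_contra! hc
  have hsum : (∑ y ∈ M.N, if M.θ ≤ c (x + y) then (M.D y : ℤ) else 0) = 0 :=
    sum_eq_zero fun y hy => if_neg (not_le.2 (hc.2 y hy))
  have := cast_F_apply (M := M) c x
  simp only [hc.1, hsum, Nat.cast_zero, M.θ_pos.not_ge, if_false] at this
  omega

lemma Stable.F_eq (h : M.Stable c) : M.F c = c := by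
  funext x
  have hsum : (∑ y ∈ M.N, if M.θ ≤ c (x + y) then (M.D y : ℤ) else 0) = 0 :=
    sum_eq_zero fun y _ => if_neg (not_le.2 (h (x + y)))
  have := cast_F_apply (M := M) c x
  simp only [hsum, not_le.2 (h x), if_false] at this
  omega

lemma Stable.F (h : M.Stable c) : M.Stable (M.F c) := by
  rwa [h.F_eq]

lemma sum_mul_F_eq {B : Finset (Fin d → ℤ)} (hc : support c ⊆ B) (hF : support (M.F c) ⊆ B)
    (φ : (Fin d → ℤ) → ℤ) :
    ∑ x ∈ B, (M.F c x : ℤ) * φ x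
      = ∑ x ∈ B, (c x : ℤ) * φ x + ∑ u ∈ B with M.θ ≤ c u, M.gain φ u := by
  have hshift : ∀ y ∈ M.N,
      ∑ x ∈ B with M.θ ≤ c (x + y), φ x = ∑ u ∈ B with M.θ ≤ c u, φ (u - y) := by
    intro y hy
    refine sum_nbij' (· + y) (· - y) ?_ ?_ (fun _ _ => add_sub_cancel_right _ _)
      (fun _ _ => sub_add_cancel _ _) (fun _ _ => by simp)
    · intro x hx
      simp only [mem_filter] at hx ⊢
      exact ⟨hc (mem_support.2 (by have := M.θ_pos; omega)), hx.2⟩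
    · intro u hu
      simp only [mem_filter, sub_add_cancel] at hu ⊢
      exact ⟨hF (F_apply_ne_zero_of_unstable hy (by simpa using hu.2)), hu.2⟩
  have hout : ∑ x ∈ B, (if M.θ ≤ c x then (M.θ : ℤ) else 0) * φ x
      = ∑ u ∈ B with M.θ ≤ c u, ∑ y ∈ M.N, (M.D y : ℤ) * φ u := by
    simp only [ite_mul, zero_mul, ← sum_filter, cast_θ, sum_mul]
  have hin : ∑ x ∈ B, (∑ y ∈ M.N, if M.θ ≤ c (x + y) then (M.D y : ℤ) else 0) * φ x
      = ∑ u ∈ B with M.θ ≤ c u, ∑ y ∈ M.N, (M.D y : ℤ) * φ (u - y) := by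
    rw [sum_comm]
    simp only [sum_mul, ite_mul, zero_mul]
    rw [sum_comm]
    refine sum_congr rfl fun y hy => ?_
    rw [← sum_filter, ← mul_sum, ← mul_sum, hshift y hy]
  simp only [cast_F_apply, add_mul, sub_mul, sum_add_distrib, sum_sub_distrib, hout, hin, gain,
    mul_sub]
  ring

section Mass

lemma support_F_subset :
    support (M.F c) ⊆ support c ∪ ⋃ y ∈ M.N, (· - y) '' support c := by
  intro x hx
  rcases ne_zero_or_exists_of_F_apply_ne_zero hx with h | ⟨y, hy, hu⟩
  · exact Or.inl h
  · refine Or.inr (Set.mem_iUnion₂.2 ⟨y, hy, x + y, ?_, add_sub_cancel_right x y⟩)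
    exact mem_support.2 (by have := M.θ_pos; omega)

variable (M) in
lemma _root_.FiniteConfig.F (hc : FiniteConfig c) : FiniteConfig (M.F c) :=
  (hc.union (M.N.finite_toSet.biUnion fun _ _ => hc.image _)).subset support_F_subset

variable (M) in
lemma _root_.FiniteConfig.iterate_F (hc : FiniteConfig c) (t : ℕ) :
    FiniteConfig (M.F^[t] c) := by
  induction t with
  | zero => exact hc
  | succ t ih => rw [iterate_succ_apply']; exact ih.F M

lemma finsum_F (hc : FiniteConfig c) : ∑ᶠ x, M.F c x = ∑ᶠ x, c x := by
  classical
  have h₁ : support c ⊆ ↑(hc.toFinset ∪ (hc.F M).toFinset) := by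
    rw [coe_union, hc.coe_toFinset]; exact Set.subset_union_left
  have h₂ : support (M.F c) ⊆ ↑(hc.toFinset ∪ (hc.F M).toFinset) := by
    rw [coe_union, (hc.F M).coe_toFinset]; exact Set.subset_union_right
  have h := sum_mul_F_eq h₁ h₂ 1
  simp only [Pi.one_apply, mul_one, gain, sub_self, mul_zero, sum_const_zero, add_zero] at h
  rw [finsum_eq_finsetSum_of_support_subset _ h₁, finsum_eq_finsetSum_of_support_subset _ h₂]
  exact_mod_cast h

lemma finsum_iterate_F (hc : FiniteConfig c) (t : ℕ) : ∑ᶠ x, M.F^[t] c x = ∑ᶠ x, c x := by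
  induction t with
  | zero => rfl
  | succ t ih => rw [iterate_succ_apply', finsum_F (hc.iterate_F M t), ih]

end Mass

section Potential

variable {B : Finset (Fin d → ℤ)} {φ : (Fin d → ℤ) → ℤ}

lemma sum_mul_add_one_le_sum_mul_F (hc : support c ⊆ B) (hF : support (M.F c) ⊆ B)
    (hφ : ∀ u, 1 ≤ M.gain φ u) (hu : ¬ M.Stable c) :
    ∑ x ∈ B, (c x : ℤ) * φ x + 1 ≤ ∑ x ∈ B, (M.F c x : ℤ) * φ x := by
  obtain ⟨x, hx⟩ : ∃ x, M.θ ≤ c x := by simpa [Sandpile.Stable] using hu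
  have hxU : x ∈ B.filter (M.θ ≤ c ·) :=
    mem_filter.2 ⟨hc (mem_support.2 (by have := M.θ_pos; omega)), hx⟩
  have := single_le_sum (fun u _ => zero_le_one.trans (hφ u)) hxU
  rw [sum_mul_F_eq hc hF]
  linarith [hφ x]

lemma sum_mul_add_le_sum_mul_iterate_F (hB : ∀ t, support (M.F^[t] c) ⊆ B)
    (hφ : ∀ u, 1 ≤ M.gain φ u) {T : ℕ} (hT : ¬ M.Stable (M.F^[T] c)) :
    ∑ x ∈ B, (c x : ℤ) * φ x + (T + 1) ≤ ∑ x ∈ B, (M.F^[T + 1] c x : ℤ) * φ x := by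
  have hstep : ∀ t, ¬ M.Stable (M.F^[t] c) → ∑ x ∈ B, (M.F^[t] c x : ℤ) * φ x + 1
      ≤ ∑ x ∈ B, (M.F^[t + 1] c x : ℤ) * φ x := fun t ht => by
    rw [iterate_succ_apply']
    exact sum_mul_add_one_le_sum_mul_F (hB t)
      (by simpa only [iterate_succ_apply'] using hB (t + 1)) hφ ht
  induction T with
  | zero => simpa using hstep 0 hT
  | succ T ih =>
    have hT' : ¬ M.Stable (M.F^[T] c) := fun h => hT (by rw [iterate_succ_apply']; exact h.F)
    have := hstep (T + 1) hT
    push_cast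
    linarith [ih hT']

end Potential

section Frontier

variable {ℓ : (Fin d → ℤ) →+ ℤ} {r : ℕ}

lemma Complete.exists_pos (hM : M.Complete) (hℓ : ℓ ≠ 0) : ∃ y ∈ M.N, 0 < ℓ y := by
  obtain ⟨z, hz⟩ : ∃ z, 0 < ℓ z := by
    obtain ⟨z, hz⟩ := DFunLike.ne_iff.1 hℓ
    rcases lt_or_gt_of_ne hz with h | h
    · exact ⟨-z, by simpa using h⟩
    · exact ⟨z, by simpa using h⟩
  obtain ⟨a, rfl⟩ := hM z
  by_contra! h
  simp only [map_sum, map_zsmul, smul_eq_mul] at hz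
  exact hz.not_ge (sum_nonpos fun v hv => mul_nonpos_of_nonneg_of_nonpos (by positivity) (h v hv))

lemma exists_sub_mem_slab (hM : M.Complete) (hℓ : ℓ ≠ 0) (hℓr : ∀ y ∈ M.N, |ℓ y| ≤ r)
    {b : ℤ} {w : Fin d → ℤ} (hw : b - 2 * r ≤ ℓ w ∧ ℓ w < b) :
    ∃ y ∈ M.N, b - 2 * r ≤ ℓ (w - y) ∧ ℓ (w - y) < b := by
  have := hw.1
  have := hw.2
  by_cases h : ℓ w < b - r
  · obtain ⟨y, hy, hneg⟩ := hM.exists_pos (neg_ne_zero.2 hℓ)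
    have := abs_le.1 (hℓr y hy)
    simp only [AddMonoidHom.neg_apply, Left.neg_pos_iff] at hneg
    exact ⟨y, hy, by rw [map_sub]; omega⟩
  · obtain ⟨y, hy, hpos⟩ := hM.exists_pos hℓ
    have := abs_le.1 (hℓr y hy)
    exact ⟨y, hy, by rw [map_sub]; omega⟩

lemma F_apply_eq_zero_of_le (hℓr : ∀ y ∈ M.N, |ℓ y| ≤ r) {b : ℤ}
    (hc : ∀ x, c x ≠ 0 → ℓ x < b) (hstrip : ∀ w, b - r ≤ ℓ w → ℓ w < b → c w < M.θ)
    {x : Fin d → ℤ} (hx : b ≤ ℓ x) : M.F c x = 0 := by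
  by_contra hne
  rcases ne_zero_or_exists_of_F_apply_ne_zero hne with h | ⟨y, hy, hu⟩
  · exact (hc x h).not_ge hx
  · have hxy := hc (x + y) (by have := M.θ_pos; omega)
    have := abs_le.1 (hℓr y hy)
    rw [map_add] at hxy
    exact (hstrip (x + y) (by rw [map_add]; omega) (by rw [map_add]; omega)).not_ge hu

lemma exists_F_apply_ne_zero_of_mem {W : Set (Fin d → ℤ)} (hW : ∀ w ∈ W, ∃ y ∈ M.N, w - y ∈ W)
    {z : Fin d → ℤ} (hz : z ∈ W) (hcz : c z ≠ 0) : ∃ z ∈ W, M.F c z ≠ 0 := by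
  by_cases h : M.θ ≤ c z
  · obtain ⟨y, hy, hzy⟩ := hW z hz
    exact ⟨z - y, hzy, F_apply_ne_zero_of_unstable hy (by rwa [sub_add_cancel])⟩
  · exact ⟨z, hz, by have := le_F_apply_of_lt (not_le.1 h); omega⟩

lemma exists_iterate_F_apply_ne_zero_of_mem {W : Set (Fin d → ℤ)}
    (hW : ∀ w ∈ W, ∃ y ∈ M.N, w - y ∈ W) {z : Fin d → ℤ} (hz : z ∈ W) (hcz : c z ≠ 0)
    (t : ℕ) : ∃ z ∈ W, M.F^[t] c z ≠ 0 := by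
  induction t with
  | zero => exact ⟨z, hz, hcz⟩
  | succ t ih =>
    obtain ⟨z', hz', h⟩ := ih
    simpa only [iterate_succ_apply'] using exists_F_apply_ne_zero_of_mem hW hz' h

lemma exists_iterate_F_apply_ne_zero_below (hM : M.Complete) (hℓ : ℓ ≠ 0)
    (hℓr : ∀ y ∈ M.N, |ℓ y| ≤ r) {b : ℤ} (hc : ∀ x, c x ≠ 0 → ℓ x < b) {t : ℕ}
    {x : Fin d → ℤ} (hx : M.F^[t] c x ≠ 0) (hbx : b ≤ ℓ x) :
    ∃ z, M.F^[t] c z ≠ 0 ∧ b - 2 * r ≤ ℓ z ∧ ℓ z < b := by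
  by_cases h : ∃ s ≤ t, ∃ w, M.θ ≤ M.F^[s] c w ∧ b - r ≤ ℓ w ∧ ℓ w < b
  · obtain ⟨s, hs, w, hθw, hw⟩ := h
    have hW : ∀ w ∈ {z | b - 2 * r ≤ ℓ z ∧ ℓ z < b}, ∃ y ∈ M.N,
        w - y ∈ {z | b - 2 * r ≤ ℓ z ∧ ℓ z < b} := fun w hw =>
      exists_sub_mem_slab hM hℓ hℓr hw
    obtain ⟨z, hz, hne⟩ := exists_iterate_F_apply_ne_zero_of_mem hW (c := M.F^[s] c) (z := w)
      ⟨by have := hw.1; omega, hw.2⟩ (by have := M.θ_pos; omega) (t - s)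
    rw [← iterate_add_apply, Nat.sub_add_cancel hs] at hne
    exact ⟨z, hne, hz⟩
  · push Not at h
    have hlt : ∀ s ≤ t, ∀ x, M.F^[s] c x ≠ 0 → ℓ x < b := by
      intro s
      induction s with
      | zero => exact fun _ => hc
      | succ s ih =>
        intro hs x hx
        by_contra! hbx
        rw [iterate_succ_apply'] at hx
        refine hx (F_apply_eq_zero_of_le hℓr (ih (by omega)) (fun w h₁ h₂ => ?_) hbx)
        by_contra! hθ
        exact (h s (by omega) w hθ h₁).not_gt h₂
    exact absurd hbx (hlt t le_rfl x hx).not_ge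

theorem lt_of_iterate_F_apply_ne_zero (hM : M.Complete) (hℓ : ℓ ≠ 0)
    (hℓr : ∀ y ∈ M.N, |ℓ y| ≤ r) (hc : FiniteConfig c) {b : ℤ} (hc₀ : ∀ x, c x ≠ 0 → ℓ x < b)
    {t : ℕ} {x : Fin d → ℤ} (hx : M.F^[t] c x ≠ 0) :
    ℓ x < b + 2 * r * ((∑ᶠ x, c x : ℕ) + 1) := by
  set S := ∑ᶠ x, c x
  by_contra! hbx
  have hr : (0 : ℤ) < r := by
    obtain ⟨y, hy, h⟩ := hM.exists_pos hℓ
    exact h.trans_le ((le_abs_self _).trans (hℓr y hy))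
  have hwin : ∀ j ∈ range (S + 1), ∃ z, M.F^[t] c z ≠ 0 ∧
      b + 2 * r * j ≤ ℓ z ∧ ℓ z < b + 2 * r * (j + 1) := by
    intro j hj
    have hjS : (j : ℤ) + 1 ≤ S + 1 := by simp at hj; omega
    obtain ⟨z, hz, h₁, h₂⟩ := exists_iterate_F_apply_ne_zero_below hM hℓ hℓr
      (b := b + 2 * r * (j + 1)) (fun x hx => (hc₀ x hx).trans_le (by nlinarith)) hx
      (le_trans (by nlinarith) hbx)
    exact ⟨z, hz, by linarith, h₂⟩
  choose! z hz hzlo hzhi using hwin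
  have hinj : Set.InjOn z (range (S + 1)) := by
    refine Set.InjOn.of_comp (f := z) (g := ℓ) (StrictMonoOn.injOn fun j hj k hk hjk => ?_)
    have : (j : ℤ) + 1 ≤ k := by exact_mod_cast hjk
    have := hzhi j hj
    have := hzlo k hk
    simp only [Function.comp_apply]
    nlinarith
  have : S + 1 ≤ S := calc
    S + 1 = ∑ j ∈ range (S + 1), 1 := by simp
    _ ≤ ∑ j ∈ range (S + 1), M.F^[t] c (z j) :=
      sum_le_sum fun j hj => Nat.one_le_iff_ne_zero.2 (hz j hj)
    _ = ∑ x ∈ (range (S + 1)).image z, M.F^[t] c x := (sum_image hinj).symm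
    _ ≤ ∑ᶠ x, M.F^[t] c x := sum_le_finsum (hc.iterate_F M t) _
    _ = S := finsum_iterate_F hc t
  omega

theorem support_iterate_F_subset_supBall (hM : M.Complete) (hr : ∀ v ∈ M.N, ∀ i, |v i| ≤ r)
    {n : ℕ} (hc : InCube n c) (t : ℕ) :
    support (M.F^[t] c) ⊆ ↑(supBall d (n + 2 * r * (∑ᶠ x, c x + 1))) := by
  intro x hx
  rw [mem_coe, mem_supBall]
  intro i
  have hev : Pi.evalAddMonoidHom (fun _ => ℤ) i ≠ 0 := fun h => by
    simpa using DFunLike.congr_fun h (Pi.single i 1)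
  have h₁ := lt_of_iterate_F_apply_ne_zero hM hev (fun y hy => hr y hy i) hc.finiteConfig
    (b := n) (fun x hx => (hc.mem_Ico hx i).2) hx
  have h₂ := lt_of_iterate_F_apply_ne_zero hM (neg_ne_zero.2 hev)
    (fun y hy => by simpa using hr y hy i) hc.finiteConfig (b := n)
    (fun x hx => by have := hc.mem_Ico hx i; simp; omega) hx
  simp only [Pi.evalAddMonoidHom_apply, AddMonoidHom.neg_apply] at h₁ h₂
  rw [abs_le]
  push_cast
  constructor <;> linarith

end Frontier

section Drift

variable {r : ℕ}

lemma abs_drift_apply_le (hr : ∀ v ∈ M.N, ∀ i, |v i| ≤ r) (i : Fin d) :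
    |M.drift i| ≤ M.θ * r := by
  simp only [drift, Finset.sum_apply, Pi.smul_apply, smul_eq_mul, cast_θ, sum_mul]
  refine (abs_sum_le_sum_abs _ _).trans (sum_le_sum fun y hy => ?_)
  rw [abs_mul, Nat.abs_cast]
  exact mul_le_mul_of_nonneg_left (hr y hy i) (by positivity)

lemma gain_dotProduct_self (u : Fin d → ℤ) :
    M.gain (fun x => x ⬝ᵥ x) u = ∑ y ∈ M.N, (M.D y : ℤ) * (y ⬝ᵥ y) - 2 * (u ⬝ᵥ M.drift) := by
  simp only [gain, drift, dotProduct_sum, dotProduct_smul, mul_sum, ← sum_sub_distrib]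
  refine sum_congr rfl fun y _ => ?_
  simp only [sub_dotProduct, dotProduct_sub, dotProduct_comm y u, smul_eq_mul]
  ring

lemma one_le_gain_dotProduct_self (h : M.drift = 0) (u : Fin d → ℤ) :
    1 ≤ M.gain (fun x => x ⬝ᵥ x) u := by
  rw [gain_dotProduct_self, h, dotProduct_zero, mul_zero, sub_zero]
  calc (1 : ℤ) ≤ M.θ := by exact_mod_cast M.θ_pos
    _ = ∑ y ∈ M.N, (M.D y : ℤ) * 1 := by simp [cast_θ]
    _ ≤ ∑ y ∈ M.N, (M.D y : ℤ) * (y ⬝ᵥ y) := sum_le_sum fun y hy =>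
      mul_le_mul_of_nonneg_left (one_le_dotProduct_self (ne_of_mem_of_not_mem hy M.zero_not_mem))
        (by positivity)

lemma gain_neg_dotProduct (v u : Fin d → ℤ) : M.gain (fun x => -(x ⬝ᵥ v)) u = M.drift ⬝ᵥ v := by
  simp only [gain, drift, sum_dotProduct, smul_dotProduct, sub_dotProduct, smul_eq_mul]
  ring_nf

lemma exists_potential (hr : ∀ v ∈ M.N, ∀ i, |v i| ≤ r) (R : ℕ) :
    ∃ φ : (Fin d → ℤ) → ℤ, (∀ u, 1 ≤ M.gain φ u) ∧
      ∀ x ∈ supBall d R, |φ x| ≤ d * (R * (R + M.θ * r)) := by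
  by_cases h : M.drift = 0
  · refine ⟨fun x => x ⬝ᵥ x, one_le_gain_dotProduct_self h, fun x hx => ?_⟩
    have hx := mem_supBall.1 hx
    simpa using abs_dotProduct_le hx fun i => (hx i).trans (le_add_of_nonneg_right (by positivity))
  · refine ⟨fun x => -(x ⬝ᵥ M.drift), fun u => ?_, fun x hx => ?_⟩
    · rw [gain_neg_dotProduct]
      exact one_le_dotProduct_self h
    · rw [abs_neg]
      simpa using abs_dotProduct_le (mem_supBall.1 hx)
        fun i => (abs_drift_apply_le hr i).trans (le_add_of_nonneg_left (by positivity))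

end Drift

end Sandpile

lemma two_mul_mul_le_time_bound {d θ r n S : ℕ} (hd : 1 ≤ d) (hθ : 1 ≤ θ) (hr : 1 ≤ r)
    (hS : S ≤ (2 * θ - 1) * n ^ d) :
    2 * S * (d * ((n + 2 * r * (S + 1)) * (n + 2 * r * (S + 1) + θ * r)))
      ≤ 2 ^ (3 * d + 4) * d ^ (d + 1) * θ ^ (d + 2) * r ^ (d + 1) * n ^ (d ^ 2 + 2 * d) := by
  rcases Nat.eq_zero_or_pos n with rfl | hn
  · simp [zero_pow (show d ≠ 0 by omega)] at hS
    simp [hS]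
  have hN : 1 ≤ n ^ d := Nat.one_le_pow _ _ hn
  have hnN : n ≤ n ^ d := Nat.le_self_pow (by omega) n
  have hθrN : n ^ d ≤ θ * r * n ^ d := Nat.le_mul_of_pos_left _ (by positivity)
  have hS1 : S + 1 ≤ 2 * θ * n ^ d := by
    have : (2 * θ - 1) * n ^ d = 2 * θ * n ^ d - n ^ d := Nat.sub_one_mul _ _
    have : n ^ d ≤ 2 * θ * n ^ d := Nat.le_mul_of_pos_left _ (by omega)
    omega
  have hR : n + 2 * r * (S + 1) ≤ 5 * θ * r * n ^ d := by
    have : 2 * r * (S + 1) ≤ 2 * r * (2 * θ * n ^ d) := by gcongr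
    nlinarith
  have hRθr : n + 2 * r * (S + 1) + θ * r ≤ 6 * θ * r * n ^ d := by
    have : θ * r ≤ θ * r * n ^ d := Nat.le_mul_of_pos_right _ (by omega)
    linarith
  calc 2 * S * (d * ((n + 2 * r * (S + 1)) * (n + 2 * r * (S + 1) + θ * r)))
      ≤ 2 * (2 * θ * n ^ d) * (d * ((5 * θ * r * n ^ d) * (6 * θ * r * n ^ d))) := by
        gcongr; omega
    _ = 120 * d * θ ^ 3 * r ^ 2 * n ^ (3 * d) := by rw [mul_comm 3 d, pow_mul]; ring
    _ ≤ 2 ^ (3 * d + 4) * d ^ (d + 1) * θ ^ (d + 2) * r ^ (d + 1) * n ^ (d ^ 2 + 2 * d) := by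
        gcongr ?_ * ?_ * ?_ * ?_ * ?_
        · calc 120 ≤ 2 ^ 7 := by norm_num
            _ ≤ 2 ^ (3 * d + 4) := Nat.pow_le_pow_right (by norm_num) (by omega)
        · exact Nat.le_self_pow (by omega) d
        · exact Nat.pow_le_pow_right hθ (by omega)
        · exact Nat.pow_le_pow_right hr (by omega)
        · exact Nat.pow_le_pow_right hn (by nlinarith)

theorem sandpile_polynomial_stabilization_general {d : ℕ} (M : Sandpile d)
    (hcomp : M.Complete) (r : ℕ) (hr : M.IsRadius r) (n : ℕ)
    (c : (Fin d → ℤ) → ℕ) (hcube : InCube n c) (hbound : ∀ x, c x < 2 * M.θ) :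
    M.Stable (M.F^[2 ^ (3 * d + 4) * d ^ (d + 1) * M.θ ^ (d + 2)
      * r ^ (d + 1) * n ^ (d ^ 2 + 2 * d)] c) := by
  set T := 2 ^ (3 * d + 4) * d ^ (d + 1) * M.θ ^ (d + 2) * r ^ (d + 1) * n ^ (d ^ 2 + 2 * d)
  by_contra hT
  set S := ∑ᶠ x, c x
  set R := n + 2 * r * (S + 1)
  have hS : S ≤ (2 * M.θ - 1) * n ^ d := hcube.finsum_le fun x => by have := hbound x; omega
  obtain ⟨φ, hgain, hφ⟩ := M.exists_potential hr.abs_le R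
  have hΦ : ∀ t, |∑ x ∈ supBall d R, (M.F^[t] c x : ℤ) * φ x|
      ≤ S * (d * (R * (R + M.θ * r))) := fun t => by
    have hmass := (sum_le_finsum (hcube.finiteConfig.iterate_F M t) (supBall d R)).trans
      (Sandpile.finsum_iterate_F hcube.finiteConfig t).le
    exact (abs_sum_natCast_mul_le _ _ hφ).trans
      (mul_le_mul_of_nonneg_right (by exact_mod_cast hmass) (by positivity))
  have hgrow := Sandpile.sum_mul_add_le_sum_mul_iterate_F
    (Sandpile.support_iterate_F_subset_supBall hcomp hr.abs_le hcube) hgain hT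
  have h₀ := abs_le.1 (hΦ 0)
  have h₁ := abs_le.1 (hΦ (T + 1))
  simp only [iterate_zero, id_eq] at h₀
  have hTle : ((2 * S * (d * (R * (R + M.θ * r))) : ℕ) : ℤ) ≤ T := by
    exact_mod_cast two_mul_mul_le_time_bound M.one_le_dim M.θ_pos
      (M.one_le_of_abs_le hr.abs_le) hS
  push_cast at hTle
  linarith

/-- polynomial-time stabilization: for a complete neighborhood
of radius `r` and a configuration `c` within the elementary hypercube of side
`n` with all cells below `2θ`, the parallel dynamics reaches a stable
configuration within `T = 2^{3d+4}·d^{d+1}·θ^{d+2}·r^{d+1}·n^{d²+2d}` steps. -/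
theorem sandpile_polynomial_stabilization {d : ℕ} (hd : 1 ≤ d) (M : Sandpile d)
    (hcomp : M.Complete) (r : ℕ) (hr : M.IsRadius r) (n : ℕ)
    (c : (Fin d → ℤ) → ℕ) (hcube : InCube n c) (hbound : ∀ x, c x < 2 * M.θ) :
    M.Stable (M.F^[2 ^ (3 * d + 4) * d ^ (d + 1) * M.θ ^ (d + 2)
      * r ^ (d + 1) * n ^ (d ^ 2 + 2 * d)] c) :=
  sandpile_polynomial_stabilization_general M hcomp r hr n c hcube hbound
end
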